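/- If v, w : ℝ² → ℝ are three times continuously differentiable, then det D²v − det D²w = (1/2) div( (cof D²(v+w)) D(v − w) ). -/

import Mathlib

def cof (A : Matrix (Fin 2) (Fin 2) ℝ) : Matrix (Fin 2) (Fin 2) ℝ :=
  !![A 1 1, -(A 1 0); -(A 0 1), A 0 0]

def frob (A B : Matrix (Fin 2) (Fin 2) ℝ) : ℝ := ∑ i, ∑ j, A i j * B i j

noncomputable def pd (j : Fin 2) (f : EuclideanSpace ℝ (Fin 2) → ℝ)
    (x : EuclideanSpace ℝ (Fin 2)) : ℝ :=
  fderiv ℝ f x (EuclideanSpace.single j 1)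

noncomputable def hess (w : EuclideanSpace ℝ (Fin 2) → ℝ)
    (x : EuclideanSpace ℝ (Fin 2)) : Matrix (Fin 2) (Fin 2) ℝ :=
  fun i j => pd j (pd i w) x

/-!
Write `u = v + w` and `g = v - w`. Pointwise, `det A - det B = ½ ⟨cof (A + B), A - B⟩` because
`(X, Y) ↦ ⟨cof X, Y⟩` is the polarization of `2 det`. On the other side, `cof D²u` is
divergence free (the Piola identity, which is the symmetry of the third derivatives of `u`),
so the product rule leaves `div (cof D²u · Dg) = ⟨cof D²u, D²g⟩`.
-/

open Finset

lemma det_sub_det_eq_frob_cof (A B : Matrix (Fin 2) (Fin 2) ℝ) :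
    A.det - B.det = 1 / 2 * frob (cof (A + B)) (A - B) := by
  simp only [Matrix.det_fin_two, frob, cof, Fin.sum_univ_two, Matrix.add_apply, Matrix.sub_apply,
    Matrix.of_apply, Matrix.cons_val', Matrix.cons_val_zero, Matrix.cons_val_one,
    Matrix.empty_val', Matrix.cons_val_fin_one]
  ring

section PartialDerivatives

variable {f g : EuclideanSpace ℝ (Fin 2) → ℝ} {x : EuclideanSpace ℝ (Fin 2)}

lemma contDiff_pd {n : WithTop ℕ∞} (hf : ContDiff ℝ (n + 1) f) (j : Fin 2) :
    ContDiff ℝ n (pd j f) :=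
  (hf.fderiv_right le_rfl).clm_apply contDiff_const

lemma pd_add (i : Fin 2) (hf : DifferentiableAt ℝ f x) (hg : DifferentiableAt ℝ g x) :
    pd i (fun y => f y + g y) x = pd i f x + pd i g x := by
  simp [pd, fderiv_fun_add hf hg]

lemma pd_sub (i : Fin 2) (hf : DifferentiableAt ℝ f x) (hg : DifferentiableAt ℝ g x) :
    pd i (fun y => f y - g y) x = pd i f x - pd i g x := by
  simp [pd, fderiv_fun_sub hf hg]

lemma pd_neg (i : Fin 2) : pd i (fun y => -f y) x = -pd i f x := by
  simp [pd, fderiv_fun_neg]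

lemma pd_mul (i : Fin 2) (hf : DifferentiableAt ℝ f x) (hg : DifferentiableAt ℝ g x) :
    pd i (fun y => f y * g y) x = pd i f x * g x + f x * pd i g x := by
  simp [pd, fderiv_fun_mul hf hg]
  ring

lemma pd_sum {ι : Type*} (s : Finset ι) (i : Fin 2) {F : ι → EuclideanSpace ℝ (Fin 2) → ℝ}
    (hF : ∀ k ∈ s, DifferentiableAt ℝ (F k) x) :
    pd i (fun y => ∑ k ∈ s, F k y) x = ∑ k ∈ s, pd i (F k) x := by
  simp [pd, fderiv_fun_sum hF]

lemma pd_comm (hf : ContDiff ℝ 2 f) (i j : Fin 2) (x : EuclideanSpace ℝ (Fin 2)) :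
    pd i (pd j f) x = pd j (pd i f) x := by
  have hd : DifferentiableAt ℝ (fderiv ℝ f) x :=
    (hf.fderiv_right (m := 1) (by norm_num)).differentiable one_ne_zero x
  have h2 : ∀ a b : Fin 2, pd a (pd b f) x =
      fderiv ℝ (fderiv ℝ f) x (EuclideanSpace.single a 1) (EuclideanSpace.single b 1) := by
    intro a b
    have : pd b f = fun y => fderiv ℝ f y (EuclideanSpace.single b 1) := rfl
    rw [pd, this, fderiv_clm_apply hd (differentiableAt_const _)]
    simp
  rw [h2, h2]
  exact hf.contDiffAt.isSymmSndFDerivAt (by norm_num) _ _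

end PartialDerivatives

section Hessian

variable {u v w g : EuclideanSpace ℝ (Fin 2) → ℝ}

lemma hess_add (hv : ContDiff ℝ 2 v) (hw : ContDiff ℝ 2 w) (x : EuclideanSpace ℝ (Fin 2)) :
    hess (fun z => v z + w z) x = hess v x + hess w x := by
  have hgrad : ∀ i, pd i (fun z => v z + w z) = fun y => pd i v y + pd i w y := fun i =>
    funext fun y => pd_add i (hv.differentiable two_ne_zero y) (hw.differentiable two_ne_zero y)
  ext i j
  simp only [hess, hgrad, Matrix.add_apply]
  exact pd_add j ((contDiff_pd hv i).differentiable one_ne_zero x)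
    ((contDiff_pd hw i).differentiable one_ne_zero x)

lemma hess_sub (hv : ContDiff ℝ 2 v) (hw : ContDiff ℝ 2 w) (x : EuclideanSpace ℝ (Fin 2)) :
    hess (fun z => v z - w z) x = hess v x - hess w x := by
  have hgrad : ∀ i, pd i (fun z => v z - w z) = fun y => pd i v y - pd i w y := fun i =>
    funext fun y => pd_sub i (hv.differentiable two_ne_zero y) (hw.differentiable two_ne_zero y)
  ext i j
  simp only [hess, hgrad, Matrix.sub_apply]
  exact pd_sub j ((contDiff_pd hv i).differentiable one_ne_zero x)
    ((contDiff_pd hw i).differentiable one_ne_zero x)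

lemma contDiff_cof_hess_apply {n : WithTop ℕ∞} (hu : ContDiff ℝ (n + 1 + 1) u) (i j : Fin 2) :
    ContDiff ℝ n (fun y => cof (hess u y) i j) := by
  have h : ∀ a b, ContDiff ℝ n (pd b (pd a u)) := fun a b => contDiff_pd (contDiff_pd hu a) b
  fin_cases i <;> fin_cases j
  exacts [h 1 1, (h 1 0).neg, (h 0 1).neg, h 0 0]

/-- Piola identity. -/
lemma sum_pd_cof_hess (hu : ContDiff ℝ 3 u) (j : Fin 2) (x : EuclideanSpace ℝ (Fin 2)) :
    ∑ i, pd i (fun y => cof (hess u y) i j) x = 0 := by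
  have hmixed : pd 0 (pd 1 u) = pd 1 (pd 0 u) := funext (pd_comm (hu.of_le (by norm_num)) 0 1)
  have h3 : ∀ c, pd 0 (pd 1 (pd c u)) x = pd 1 (pd 0 (pd c u)) x :=
    fun c => pd_comm (contDiff_pd hu c) 0 1 x
  fin_cases j
  · simp [Fin.sum_univ_two, cof, hess, pd_neg, h3, hmixed]
  · simp [Fin.sum_univ_two, cof, hess, pd_neg, ← h3, hmixed]

lemma sum_pd_cof_hess_mul_pd (hu : ContDiff ℝ 3 u) (hg : ContDiff ℝ 2 g)
    (x : EuclideanSpace ℝ (Fin 2)) :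
    ∑ i, pd i (fun y => ∑ j, cof (hess u y) i j * pd j g y) x =
      frob (cof (hess u x)) (hess g x) := by
  have hcof : ∀ i j, Differentiable ℝ (fun y => cof (hess u y) i j) := fun i j =>
    (contDiff_cof_hess_apply (n := 1) hu i j).differentiable one_ne_zero
  have hgrad : ∀ j, Differentiable ℝ (pd j g) := fun j =>
    (contDiff_pd hg j).differentiable one_ne_zero
  calc ∑ i, pd i (fun y => ∑ j, cof (hess u y) i j * pd j g y) x
      = ∑ i, ∑ j, (pd i (fun y => cof (hess u y) i j) x * pd j g x +
          cof (hess u x) i j * pd i (pd j g) x) := by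
        refine sum_congr rfl fun i _ => ?_
        rw [pd_sum (F := fun j y => cof (hess u y) i j * pd j g y) _ _
          fun j _ => (hcof i j x).fun_mul (hgrad j x)]
        exact sum_congr rfl fun j _ => pd_mul i (hcof i j x) (hgrad j x)
    _ = ∑ j, (∑ i, pd i (fun y => cof (hess u y) i j) x) * pd j g x +
          ∑ i, ∑ j, cof (hess u x) i j * hess g x i j := by
        simp only [sum_add_distrib, sum_mul, hess, pd_comm hg]
        rw [sum_comm]
    _ = frob (cof (hess u x)) (hess g x) := by
        simp [sum_pd_cof_hess hu, frob]

end Hessian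

theorem det_hess_sub_det_hess (v w : EuclideanSpace ℝ (Fin 2) → ℝ)
    (hv : ContDiff ℝ 3 v) (hw : ContDiff ℝ 3 w) (x : EuclideanSpace ℝ (Fin 2)) :
    (hess v x).det - (hess w x).det =
      (1 / 2) * ∑ i, pd i (fun y =>
        ∑ j, cof (hess (fun z => v z + w z) y) i j * (pd j v y - pd j w y)) x := by
  have hv2 : ContDiff ℝ 2 v := hv.of_le (by norm_num)
  have hw2 : ContDiff ℝ 2 w := hw.of_le (by norm_num)
  have hgrad : ∀ j y, pd j v y - pd j w y = pd j (fun z => v z - w z) y := fun j y =>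
    (pd_sub j (hv.differentiable (by norm_num) y) (hw.differentiable (by norm_num) y)).symm
  simp only [hgrad]
  rw [sum_pd_cof_hess_mul_pd (hv.add hw) (hv2.sub hw2), hess_add hv2 hw2, hess_sub hv2 hw2,
    det_sub_det_eq_frob_cof]
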